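/- arXiv:2110.07350 — 8 statements merged into one kernel-verified Lean document; each statement's English description precedes it below -/
import Mathlib

section
/- Let $\{\ell_n\}$ be a decreasing sequence of reals with $0<\ell_n<1$ and let $m>0$. Then the condition $\limsup_{n\to\infty} (\ell_1+\cdots+\ell_n)/\ln n \geq 1/m$ holds if and only if for every $a>m$ the series $\sum_{n=1}^\infty n^{-2} e^{a(\ell_1+\cdots+\ell_n)}$ diverges. -/
/-!
Write `S n = ℓ 1 + ⋯ + ℓ n`, which is monotone. If `∑ e^{a S n} / n²` converges to `T`, the block
`n ≤ k < 2n` of the series alone gives `e^{a S n} ≤ 4 T n`, so `S n ≤ (log n + log (4T)) / a` and the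
limsup is at most `1 / a < 1 / m`. Conversely, if the limsup is below `1 / m`, then
`S n ≤ c log n` eventually for some `c < 1 / m`, and for `m < a < 1 / c` the terms are bounded by the
summable `n ^ (a c - 2)`.
-/
open Filter Finset Real Topology

theorem Monotone.le_four_mul_tsum_mul {g : ℕ → ℝ} (hg : Monotone g) (hg0 : ∀ n, 0 ≤ g n)
    (hsum : Summable (fun n : ℕ => 1 / (n : ℝ) ^ 2 * g n)) {n : ℕ} (hn : 0 < n) :
    g n ≤ 4 * (∑' k : ℕ, 1 / (k : ℝ) ^ 2 * g k) * n := by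
  have hn' : (0 : ℝ) < n := by exact_mod_cast hn
  have hterm : ∀ k ∈ Ico n (2 * n), g n / (4 * n ^ 2) ≤ 1 / (k : ℝ) ^ 2 * g k := by
    intro k hk
    obtain ⟨hnk, hk2n⟩ := mem_Ico.mp hk
    have hk : (k : ℝ) ≤ 2 * n := by exact_mod_cast hk2n.le
    have hk0 : (0 : ℝ) < k := by exact_mod_cast hn.trans_le hnk
    calc g n / (4 * n ^ 2) = 1 / (2 * (n : ℝ)) ^ 2 * g n := by ring
      _ ≤ 1 / (k : ℝ) ^ 2 * g k := by
        gcongr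
        · exact hg0 n
        · exact hg hnk
  have hblock : g n / (4 * n) ≤ ∑ k ∈ Ico n (2 * n), 1 / (k : ℝ) ^ 2 * g k := by
    calc g n / (4 * n) = ∑ _k ∈ Ico n (2 * n), g n / (4 * n ^ 2) := by
          rw [sum_const, Nat.card_Ico, show 2 * n - n = n by omega, nsmul_eq_mul]
          field_simp
      _ ≤ _ := sum_le_sum hterm
  have htail := hsum.sum_le_tsum (Ico n (2 * n)) fun k _ => mul_nonneg (by positivity) (hg0 k)
  rw [div_le_iff₀ (by positivity)] at hblock
  calc g n ≤ (∑ k ∈ Ico n (2 * n), 1 / (k : ℝ) ^ 2 * g k) * (4 * n) := hblock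
    _ ≤ (∑' k : ℕ, 1 / (k : ℝ) ^ 2 * g k) * (4 * n) := by gcongr
    _ = _ := by ring

theorem limsup_div_log_le_of_le_add_log {S : ℕ → ℝ} {a b : ℝ} (ha : 0 < a)
    (h : ∀ᶠ n : ℕ in atTop, a * S n ≤ b + log n) :
    limsup (fun n : ℕ => ((S n / log n : ℝ) : EReal)) atTop ≤ ((1 / a : ℝ) : EReal) := by
  have hbound : ∀ᶠ n : ℕ in atTop, S n / log n ≤ b / a * (log n)⁻¹ + 1 / a := by
    filter_upwards [h, eventually_ge_atTop 2] with n hSn hn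
    have hlog : 0 < log n := log_pos (by exact_mod_cast hn)
    rw [div_le_iff₀ hlog]
    field_simp
    linarith
  have htend : Tendsto (fun n : ℕ => b / a * (log n)⁻¹ + 1 / a) atTop (𝓝 (1 / a)) := by
    have := (tendsto_log_atTop.comp tendsto_natCast_atTop_atTop).inv_tendsto_atTop
    simpa using (this.const_mul (b / a)).add_const (1 / a)
  calc limsup (fun n : ℕ => ((S n / log n : ℝ) : EReal)) atTop
      ≤ limsup (fun n : ℕ => ((b / a * (log n)⁻¹ + 1 / a : ℝ) : EReal)) atTop :=
        limsup_le_limsup (hbound.mono fun n hn => EReal.coe_le_coe_iff.mpr hn)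
    _ = ((1 / a : ℝ) : EReal) := (EReal.tendsto_coe.mpr htend).limsup_eq

theorem summable_inv_sq_mul_exp_of_le_mul_log {S : ℕ → ℝ} {a c : ℝ} (ha : 0 ≤ a)
    (hac : a * c < 1) (h : ∀ᶠ n : ℕ in atTop, S n ≤ c * log n) :
    Summable (fun n : ℕ => 1 / (n : ℝ) ^ 2 * exp (a * S n)) := by
  have hpow : Summable (fun n : ℕ => (n : ℝ) ^ (a * c - 2)) :=
    summable_nat_rpow.mpr (by linarith)
  refine summable_of_isBigO_nat hpow (Asymptotics.IsBigO.of_bound 1 ?_)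
  filter_upwards [h, eventually_gt_atTop 0] with n hSn hn
  have hn' : (0 : ℝ) < n := by exact_mod_cast hn
  have hexp : exp (a * S n) ≤ (n : ℝ) ^ (a * c) := by
    rw [rpow_def_of_pos hn', exp_le_exp]
    calc a * S n ≤ a * (c * log n) := mul_le_mul_of_nonneg_left hSn ha
      _ = log n * (a * c) := by ring
  rw [norm_of_nonneg (by positivity), norm_of_nonneg (by positivity), one_mul,
    rpow_sub hn', rpow_two, one_div_mul_eq_div]
  gcongr

theorem one_div_le_limsup_div_log_iff {S : ℕ → ℝ} (hS : Monotone S) {m : ℝ} (hm : 0 < m) :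
    ((1 / m : ℝ) : EReal) ≤ limsup (fun n : ℕ => ((S n / log n : ℝ) : EReal)) atTop ↔
      ∀ a : ℝ, m < a → ¬ Summable (fun n : ℕ => 1 / (n : ℝ) ^ 2 * exp (a * S n)) := by
  set L := limsup (fun n : ℕ => ((S n / log n : ℝ) : EReal)) atTop
  constructor
  · intro h a hma hsum
    have ha : 0 < a := hm.trans hma
    set T := ∑' n : ℕ, 1 / (n : ℝ) ^ 2 * exp (a * S n)
    have hlog : ∀ᶠ n : ℕ in atTop, a * S n ≤ log (4 * T) + log n := by
      filter_upwards [eventually_gt_atTop 0] with n hn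
      have hmono : Monotone fun n => exp (a * S n) := fun _ _ hij =>
        exp_le_exp.mpr (mul_le_mul_of_nonneg_left (hS hij) ha.le)
      have hle : exp (a * S n) ≤ 4 * T * n :=
        hmono.le_four_mul_tsum_mul (fun _ => (exp_pos _).le) hsum hn
      have hTn : 0 < 4 * T * n := (exp_pos _).trans_le hle
      rw [← log_mul (left_ne_zero_of_mul hTn.ne') (right_ne_zero_of_mul hTn.ne'),
        le_log_iff_exp_le hTn]
      exact hle
    have hma' : 1 / m ≤ 1 / a :=
      EReal.coe_le_coe_iff.mp (h.trans (limsup_div_log_le_of_le_add_log ha hlog))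
    exact (one_div_lt_one_div_of_lt hm hma).not_ge hma'
  · intro h
    by_contra! hL
    obtain ⟨c, hLc, hcm⟩ : ∃ c : ℝ, max L 0 < c ∧ (c : EReal) < ((1 / m : ℝ) : EReal) :=
      EReal.exists_between_coe_real (max_lt hL (EReal.coe_pos.mpr (one_div_pos.mpr hm)))
    have hc : 0 < c := EReal.coe_pos.mp ((le_max_right _ _).trans_lt hLc)
    have hmc : m < 1 / c := (lt_one_div hm hc).mpr (EReal.coe_lt_coe_iff.mp hcm)
    obtain ⟨a, hma, hac⟩ := exists_between hmc
    refine h a hma (summable_inv_sq_mul_exp_of_le_mul_log (hm.trans hma).le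
      ((lt_div_iff₀ hc).mp hac) ?_)
    filter_upwards [eventually_lt_of_limsup_lt ((le_max_left _ _).trans_lt hLc),
      eventually_ge_atTop 2] with n hSn hn
    have hlog : 0 < log n := log_pos (by exact_mod_cast hn)
    exact ((div_lt_iff₀ hlog).mp (EReal.coe_lt_coe_iff.mp hSn)).le

theorem stmt0_general (ℓ : ℕ → ℝ) (m : ℝ) (hm : 0 < m)
    (hpos : ∀ n, 0 < ℓ n) :
    (((1 / m : ℝ) : EReal) ≤
      Filter.limsup (fun n : ℕ => (((∑ k ∈ Finset.Icc 1 n, ℓ k) / Real.log n : ℝ) : EReal)) atTop)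
    ↔ ∀ a : ℝ, m < a →
        ¬ Summable (fun n : ℕ =>
          (1 / (n : ℝ) ^ 2) * Real.exp (a * ∑ k ∈ Finset.Icc 1 n, ℓ k)) :=
  one_div_le_limsup_div_log_iff
    (fun _ _ hpq => sum_le_sum_of_subset_of_nonneg (Icc_subset_Icc_right hpq)
      fun k _ _ => (hpos k).le) hm

theorem stmt0 (ℓ : ℕ → ℝ) (m : ℝ) (hm : 0 < m)
    (hdec : Antitone ℓ) (hpos : ∀ n, 0 < ℓ n) (hlt : ∀ n, ℓ n < 1) :
    (((1 / m : ℝ) : EReal) ≤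
      Filter.limsup (fun n : ℕ => (((∑ k ∈ Finset.Icc 1 n, ℓ k) / Real.log n : ℝ) : EReal)) atTop)
    ↔ ∀ a : ℝ, m < a →
        ¬ Summable (fun n : ℕ =>
          (1 / (n : ℝ) ^ 2) * Real.exp (a * ∑ k ∈ Finset.Icc 1 n, ℓ k)) :=
  stmt0_general ℓ m hm hpos
end

section
/- Let $b\in(0,1)$, let $\{\nu_k\}_{k\geq 0}$ be positive integers, and set $\lambda_K = \nu_K / (\nu_0+\cdots+\nu_{K-1})$. Then for every $K\geq 1$ and every $u \in \{1,\dots,\nu_K\}$, writing $N = \nu_0+\cdots+\nu_{K-1}+u$, one has $\frac{(\nu_0+\cdots+\nu_{K-1}+u) b^K}{\nu_0 + \nu_1 b + \cdots + \nu_{K-1}b^{K-1} + u b^K} \leq \frac{(1+\lambda_K) b}{1+\lambda_K b} < 1$. -/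
/-!
Write `S = ν₀ + ⋯ + ν_{K-1}` and `T = ν₀ + ν₁ b + ⋯ + ν_{K-1} b^{K-1}`. Since `b^k ≥ b^{K-1}` for
`k < K`, we have `T ≥ S b^{K-1}`, and replacing `T` by `S b^{K-1}` turns the left-hand side into
`(S + u) b / (S + u b)`. The map `x ↦ (S + x) b / (S + x b)` is increasing for `b ≤ 1`, so the
value at `u` is at most the value at `ν_K`, which is `(1 + λ_K) b / (1 + λ_K b)`; this is `< 1`
because `b < 1`.
-/

open Finset

lemma sum_mul_pow_le_sum_mul_pow_mul {w : ℕ → ℝ} {b : ℝ} (hw : ∀ k, 0 ≤ w k) (hb₀ : 0 ≤ b)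
    (hb₁ : b ≤ 1) (K : ℕ) :
    (∑ k ∈ range K, w k) * b ^ K ≤ (∑ k ∈ range K, w k * b ^ k) * b := by
  rw [sum_mul, sum_mul]
  refine sum_le_sum fun k hk => ?_
  calc w k * b ^ K ≤ w k * b ^ (k + 1) :=
        mul_le_mul_of_nonneg_left (pow_le_pow_of_le_one hb₀ hb₁ (mem_range.1 hk)) (hw k)
    _ = w k * b ^ k * b := by ring

lemma add_mul_div_le_of_mul_le_mul {S T u b c : ℝ} (hS : 0 < S) (hb : 0 < b) (hc : 0 < c)
    (hu : 0 ≤ u) (h : S * c ≤ T * b) :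
    (S + u) * c / (T + u * c) ≤ (S + u) * b / (S + u * b) := by
  have hT : 0 < T := pos_of_mul_pos_left ((mul_pos hS hc).trans_le h) hb.le
  rw [div_le_div_iff₀ (by positivity) (by positivity)]
  have : c * (S + u * b) ≤ b * (T + u * c) := by nlinarith
  nlinarith [mul_le_mul_of_nonneg_left this (by positivity : 0 ≤ S + u)]

lemma monotoneOn_add_mul_div_add_mul {S b : ℝ} (hS : 0 < S) (hb₀ : 0 ≤ b) (hb₁ : b ≤ 1) :
    MonotoneOn (fun x => (S + x) * b / (S + x * b)) (Set.Ici 0) := by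
  intro x hx y hy hxy
  simp only [Set.mem_Ici] at hx hy
  rw [div_le_div_iff₀ (by positivity) (by positivity)]
  -- the cross-multiplied difference is `S b (1 - b) (y - x)`
  nlinarith [mul_nonneg (mul_nonneg hS.le hb₀) (mul_nonneg (sub_nonneg.2 hb₁) (sub_nonneg.2 hxy))]

lemma add_mul_div_add_mul_eq {S ν b : ℝ} (hS : S ≠ 0) :
    (S + ν) * b / (S + ν * b) = (1 + ν / S) * b / (1 + ν / S * b) := by
  field_simp

lemma one_add_mul_div_one_add_mul_lt_one {l b : ℝ} (hl : 0 ≤ l) (hb₀ : 0 ≤ b) (hb₁ : b < 1) :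
    (1 + l) * b / (1 + l * b) < 1 := by
  rw [div_lt_one (by positivity)]
  nlinarith

theorem stmt4 (b : ℝ) (hb : b ∈ Set.Ioo (0 : ℝ) 1) (ν : ℕ → ℕ) (hν : ∀ k, 0 < ν k)
    (K u : ℕ) (hK : 1 ≤ K) (hu : u ∈ Finset.Icc 1 (ν K))
    (lam : ℝ) (hlam : lam = (ν K : ℝ) / ∑ k ∈ Finset.range K, (ν k : ℝ)) :
    ((∑ k ∈ Finset.range K, (ν k : ℝ)) + u) * b ^ K /
        ((∑ k ∈ Finset.range K, (ν k : ℝ) * b ^ k) + u * b ^ K)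
      ≤ (1 + lam) * b / (1 + lam * b)
    ∧ (1 + lam) * b / (1 + lam * b) < 1 := by
  obtain ⟨hb₀, hb₁⟩ := hb
  have hS : 0 < ∑ k ∈ range K, (ν k : ℝ) :=
    sum_pos (fun k _ => Nat.cast_pos.2 (hν k)) ⟨0, mem_range.2 hK⟩
  have huν : (u : ℝ) ≤ ν K := by exact_mod_cast (mem_Icc.1 hu).2
  subst hlam
  refine ⟨?_, one_add_mul_div_one_add_mul_lt_one (by positivity) hb₀.le hb₁⟩
  calc _ ≤ ((∑ k ∈ range K, (ν k : ℝ)) + u) * b / ((∑ k ∈ range K, (ν k : ℝ)) + u * b) :=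
        add_mul_div_le_of_mul_le_mul hS hb₀ (pow_pos hb₀ K) u.cast_nonneg
          (sum_mul_pow_le_sum_mul_pow_mul (fun k => (ν k).cast_nonneg) hb₀.le hb₁.le K)
    _ ≤ ((∑ k ∈ range K, (ν k : ℝ)) + ν K) * b / ((∑ k ∈ range K, (ν k : ℝ)) + ν K * b) :=
        monotoneOn_add_mul_div_add_mul hS hb₀.le hb₁.le (Set.mem_Ici.2 u.cast_nonneg)
          (Set.mem_Ici.2 (ν K).cast_nonneg) huν
    _ = _ := add_mul_div_add_mul_eq hS.ne'
end

section
/- Let $b\in(0,1)$ and let $\{\nu_k\}_{k\geq 0}$ be positive integers with $\lambda_K := \nu_K/(\nu_0+\cdots+\nu_{K-1})$. Suppose along a subsequence $K_q$ one has $(\nu_0+\cdots+\nu_{K_q}) b^{K_q} / \sum_{k=0}^{K_q}\nu_k b^k \to 1$ as $q\to\infty$. Then $\lambda_{K_q} \to \infty$. -/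
/-!
Write `S = ν₀ + ⋯ + ν_{n-1}` and `λ = ν_n / S`. Since `b^k ≥ b^{n-1}` for `k < n`, the weighted sum
`∑_{k ≤ n} ν_k b^k` is at least `b^{n-1} S (1 + b λ)`, so the ratio in the hypothesis is at most
`b (1 + λ) / (1 + b λ)`. This bound is monotone in `λ` and stays below `1` for bounded `λ`; hence a
ratio tending to `1` forces `λ_{K_q} → ∞`.
-/

open Filter Finset

noncomputable def ratioBound (b x : ℝ) : ℝ := b * (1 + x) / (1 + b * x)

lemma ratioBound_lt_one {b x : ℝ} (hb0 : 0 < b) (hb1 : b < 1) (hx : 0 ≤ x) :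
    ratioBound b x < 1 := by
  rw [ratioBound, div_lt_one (by positivity)]
  nlinarith

lemma ratioBound_monotoneOn {b : ℝ} (hb0 : 0 ≤ b) (hb1 : b ≤ 1) :
    MonotoneOn (ratioBound b) (Set.Ici 0) := by
  intro x (hx : 0 ≤ x) y (hy : 0 ≤ y) hxy
  rw [ratioBound, ratioBound, div_le_div_iff₀ (by positivity) (by positivity)]
  nlinarith [mul_nonneg (mul_nonneg hb0 (sub_nonneg.2 hb1)) (sub_nonneg.2 hxy)]

lemma sum_mul_pow_pred_le_sum_mul_pow {b : ℝ} (hb0 : 0 ≤ b) (hb1 : b ≤ 1) {a : ℕ → ℝ}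
    (ha : ∀ k, 0 ≤ a k) (n : ℕ) :
    (∑ k ∈ range n, a k) * b ^ (n - 1) ≤ ∑ k ∈ range n, a k * b ^ k := by
  rw [sum_mul]
  refine sum_le_sum fun k hk => mul_le_mul_of_nonneg_left ?_ (ha k)
  exact pow_le_pow_of_le_one hb0 hb1 (by have := mem_range.1 hk; omega)

lemma weighted_ratio_le_ratioBound {b : ℝ} (hb0 : 0 < b) (hb1 : b ≤ 1) {a : ℕ → ℝ}
    (ha : ∀ k, 0 ≤ a k) {n : ℕ} (hn : 1 ≤ n) (hS : 0 < ∑ k ∈ range n, a k) :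
    (∑ k ∈ range (n + 1), a k) * b ^ n / ∑ k ∈ range (n + 1), a k * b ^ k ≤
      ratioBound b (a n / ∑ k ∈ range n, a k) := by
  have hsum := sum_mul_pow_pred_le_sum_mul_pow hb0.le hb1 ha n
  rw [sum_range_succ, sum_range_succ]
  set S := ∑ k ∈ range n, a k
  set x := a n / S
  have hSx : S * x = a n := mul_div_cancel₀ _ hS.ne'
  have hpow : b ^ n = b ^ (n - 1) * b := by rw [← pow_succ, Nat.sub_add_cancel hn]
  have hc : 0 < b ^ (n - 1) * S := by positivity
  have hx : 0 ≤ x := div_nonneg (ha n) hS.le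
  have hnum : (S + a n) * b ^ n = b ^ (n - 1) * S * (b * (1 + x)) := by
    rw [hpow, ← hSx]; ring
  have hden : b ^ (n - 1) * S * (1 + b * x) ≤ ∑ k ∈ range n, a k * b ^ k + a n * b ^ n := by
    have : b ^ (n - 1) * S * (1 + b * x) = S * b ^ (n - 1) + a n * b ^ n := by
      rw [hpow, ← hSx]; ring
    linarith
  rw [hnum, ratioBound, ← mul_div_mul_left (b * (1 + x)) (1 + b * x) hc.ne']
  exact div_le_div_of_nonneg_left (by positivity) (by positivity) hden

theorem stmt5 (b : ℝ) (hb : b ∈ Set.Ioo (0 : ℝ) 1) (ν : ℕ → ℕ) (hν : ∀ k, 0 < ν k)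
    (K : ℕ → ℕ) (hK : StrictMono K)
    (hlim : Filter.Tendsto
      (fun q : ℕ => (∑ k ∈ Finset.range (K q + 1), (ν k : ℝ)) * b ^ (K q) /
        ∑ k ∈ Finset.range (K q + 1), (ν k : ℝ) * b ^ k) atTop (nhds 1)) :
    Filter.Tendsto
      (fun q : ℕ => (ν (K q) : ℝ) / ∑ k ∈ Finset.range (K q), (ν k : ℝ))
      atTop atTop := by
  obtain ⟨hb0, hb1⟩ := hb
  refine tendsto_atTop.2 fun C => ?_
  have hc : (0 : ℝ) ≤ max C 0 := le_max_right C 0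
  filter_upwards [hlim.eventually (eventually_gt_nhds (ratioBound_lt_one hb0 hb1 hc)),
    hK.tendsto_atTop.eventually (eventually_ge_atTop 1)] with q hq hKq
  have hS : 0 < ∑ k ∈ range (K q), (ν k : ℝ) :=
    sum_pos (fun k _ => by exact_mod_cast hν k) (nonempty_range_iff.2 (by omega))
  have hratio : 0 ≤ (ν (K q) : ℝ) / ∑ k ∈ range (K q), (ν k : ℝ) := by positivity
  have hlt := hq.trans_le
    (weighted_ratio_le_ratioBound hb0 hb1.le (fun k => Nat.cast_nonneg (ν k)) hKq hS)
  exact (le_max_left C 0).trans ((ratioBound_monotoneOn hb0.le hb1.le).reflect_lt hc hratio hlt).le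
end

section
/- Let $b\in(0,1)$ and $\{\nu_k\}_{k\geq 0}$ positive reals with $\sum_{k=0}^\infty \nu_k b^{2k} < \infty$, and suppose there is $C>0$ such that $\sum_{k=0}^K \nu_k b^k \leq C \ln(\nu_0+\cdots+\nu_K)$ for all large $K$. If $\nu_K \geq \nu_0+\cdots+\nu_{K-1}$ for some large $K$, then $\nu_K b^K \leq C_0 K$ where $C_0 = 2C\ln(2/b)$. -/
/-! The single term `ν K b^K` is at most the weighted partial sum, hence at most
`C log (ν 0 + ⋯ + ν K) ≤ C log (2 ν K)` when `ν K` dominates the earlier terms; and summability of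
`ν k b^(2k)` gives `ν K ≤ b^(-2K)` eventually, so `log (2 ν K) ≤ log 2 + 2K log (1/b)`. -/

open Finset Real

lemma Real.log_le_nat_mul_log_inv_of_mul_pow_le_one {x b : ℝ} (hx : 0 < x) (hb : 0 < b) (n : ℕ)
    (h : x * b ^ n ≤ 1) : log x ≤ n * log b⁻¹ := by
  have hxle : x ≤ (b ^ n)⁻¹ := by
    rw [inv_eq_one_div, le_div_iff₀ (by positivity)]
    exact h
  calc log x ≤ log (b ^ n)⁻¹ := log_le_log hx hxle
    _ = n * log b⁻¹ := by rw [← inv_pow, log_pow]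

lemma Finset.sum_range_succ_le_two_mul {ν : ℕ → ℝ} {K : ℕ} (h : ∑ k ∈ range K, ν k ≤ ν K) :
    ∑ k ∈ range (K + 1), ν k ≤ 2 * ν K := by
  rw [sum_range_succ]
  linarith

lemma log_sum_range_succ_le_of_dominant {ν : ℕ → ℝ} (hν : ∀ k, 0 < ν k) {b : ℝ} (hb : 0 < b)
    {K : ℕ} (hdom : ∑ k ∈ range K, ν k ≤ ν K) (hK : ν K * b ^ (2 * K) ≤ 1) :
    log (∑ k ∈ range (K + 1), ν k) ≤ log 2 + 2 * K * log b⁻¹ := by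
  have hpos : 0 < ∑ k ∈ range (K + 1), ν k := sum_pos (fun i _ => hν i) nonempty_range_add_one
  calc log (∑ k ∈ range (K + 1), ν k) ≤ log (2 * ν K) :=
        log_le_log hpos (sum_range_succ_le_two_mul hdom)
    _ = log 2 + log (ν K) := log_mul two_ne_zero (hν K).ne'
    _ ≤ log 2 + 2 * K * log b⁻¹ := by
        have := log_le_nat_mul_log_inv_of_mul_pow_le_one (hν K) hb (2 * K) hK
        push_cast at this
        linarith

lemma mul_log_two_add_le_two_mul_log_div {C b K : ℝ} (hC : 0 ≤ C) (hb : 0 < b) (hK : 1 ≤ K) :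
    C * (log 2 + 2 * K * log b⁻¹) ≤ 2 * C * log (2 / b) * K := by
  have hlog : log (2 / b) = log 2 + log b⁻¹ := by
    rw [div_eq_mul_inv, log_mul two_ne_zero (inv_ne_zero hb.ne')]
  rw [hlog]
  nlinarith [mul_nonneg hC (log_nonneg one_le_two)]

theorem stmt6 (b : ℝ) (hb : b ∈ Set.Ioo (0 : ℝ) 1) (ν : ℕ → ℝ) (hν : ∀ k, 0 < ν k)
    (hsum : Summable (fun k : ℕ => ν k * b ^ (2 * k)))
    (C : ℝ) (hC : 0 < C)
    (hlog : ∃ N : ℕ, ∀ K ≥ N,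
      ∑ k ∈ Finset.range (K + 1), ν k * b ^ k ≤
        C * Real.log (∑ k ∈ Finset.range (K + 1), ν k)) :
    ∃ N : ℕ, ∀ K ≥ N, (∑ k ∈ Finset.range K, ν k) ≤ ν K →
      ν K * b ^ K ≤ (2 * C * Real.log (2 / b)) * K := by
  refine Filter.eventually_atTop.mp ?_
  filter_upwards [Filter.eventually_atTop.mpr hlog, Filter.eventually_ge_atTop 1,
    hsum.tendsto_atTop_zero.eventually_le_const one_pos] with K hK hK1 hνK hdom
  calc ν K * b ^ K ≤ ∑ k ∈ range (K + 1), ν k * b ^ k :=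
        single_le_sum (f := fun k => ν k * b ^ k)
          (fun i _ => mul_nonneg (hν i).le (pow_nonneg hb.1.le i)) (self_mem_range_succ K)
    _ ≤ C * log (∑ k ∈ range (K + 1), ν k) := hK
    _ ≤ C * (log 2 + 2 * K * log b⁻¹) :=
        mul_le_mul_of_nonneg_left (log_sum_range_succ_le_of_dominant hν hb.1 hdom hνK) hC.le
    _ ≤ 2 * C * log (2 / b) * K :=
        mul_log_two_add_le_two_mul_log_div hC.le hb.1 (by exact_mod_cast hK1)
end

section
/- Let $\ell_n = \frac{1}{n} - \frac{\beta}{n\ln n}$ for $n\geq 2$, with $\beta > 1$. Then $\limsup_{n\to\infty} (\ell_2+\cdots+\ell_n)/\ln n = 1$, yet $\sum_{n=2}^\infty \frac{1}{n^2} e^{\ell_2+\cdots+\ell_n} < \infty$. -/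
/-!
Since `ℓ_k = 1/k - β/(k log k)`, compare `1/k` with the increments of `log` and `1/(k log k)` with
those of `log ∘ log`: from `(b - a)/b ≤ log b - log a ≤ (b - a)/a` both sums are pinned down up to
a bounded error, so the partial sums are `log n - β log log n + O(1)`. Dividing by `log n` gives a
limit (not only a limsup) equal to `1`; exponentiating bounds the `n`-th term of the series by a
constant times `1/(n (log n)^β)`, which is summable for `β > 1` by Cauchy condensation.
-/

open Filter Finset

section
open Real Topology

lemma log_sub_log_le_sub_div {a b : ℝ} (ha : 0 < a) (hb : 0 < b) :
    log b - log a ≤ (b - a) / a := by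
  rw [← log_div hb.ne' ha.ne']
  calc log (b / a) ≤ b / a - 1 := log_le_sub_one_of_pos (div_pos hb ha)
    _ = (b - a) / a := by field_simp

lemma sub_div_le_log_sub_log {a b : ℝ} (ha : 0 < a) (hb : 0 < b) :
    (b - a) / b ≤ log b - log a := by
  have := log_sub_log_le_sub_div hb ha
  rw [show (b - a) / b = -((a - b) / b) by ring]
  linarith

lemma inv_add_one_le_log_add_one_sub_log {x : ℝ} (hx : 0 < x) :
    (x + 1)⁻¹ ≤ log (x + 1) - log x := by
  simpa using sub_div_le_log_sub_log hx (by linarith : 0 < x + 1)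

lemma log_add_one_sub_log_le_inv {x : ℝ} (hx : 0 < x) :
    log (x + 1) - log x ≤ x⁻¹ := by
  simpa using log_sub_log_le_sub_div hx (by linarith : 0 < x + 1)

lemma inv_mul_log_le_log_log_add_one_sub_log_log {x : ℝ} (hx : 1 < x) :
    ((x + 1) * log (x + 1))⁻¹ ≤ log (log (x + 1)) - log (log x) := by
  have hl : 0 < log x := log_pos hx
  have hl' : 0 < log (x + 1) := log_pos (by linarith)
  calc ((x + 1) * log (x + 1))⁻¹ = (x + 1)⁻¹ / log (x + 1) := by
        rw [mul_inv, div_eq_mul_inv]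
    _ ≤ (log (x + 1) - log x) / log (x + 1) := by
        gcongr; exact inv_add_one_le_log_add_one_sub_log (by linarith)
    _ ≤ log (log (x + 1)) - log (log x) := sub_div_le_log_sub_log hl hl'

lemma log_log_add_one_sub_log_log_le {x : ℝ} (hx : 1 < x) :
    log (log (x + 1)) - log (log x) ≤ (x * log x)⁻¹ := by
  have hl : 0 < log x := log_pos hx
  have hl' : 0 < log (x + 1) := log_pos (by linarith)
  calc log (log (x + 1)) - log (log x) ≤ (log (x + 1) - log x) / log x :=
        log_sub_log_le_sub_div hl hl'
    _ ≤ x⁻¹ / log x := by gcongr; exact log_add_one_sub_log_le_inv (by linarith)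
    _ = (x * log x)⁻¹ := by rw [mul_inv, div_eq_mul_inv]

lemma sum_Ioc_le_sub_of_le_sub {a g : ℕ → ℝ} {m n : ℕ} (hmn : m ≤ n)
    (h : ∀ k, m ≤ k → a (k + 1) ≤ g (k + 1) - g k) : ∑ k ∈ Ioc m n, a k ≤ g n - g m := by
  induction n, hmn using Nat.le_induction with
  | base => simp
  | succ n hmn ih => rw [sum_Ioc_succ_top hmn]; linarith [h n hmn]

lemma sub_le_sum_Ioc_of_sub_le {a g : ℕ → ℝ} {m n : ℕ} (hmn : m ≤ n)
    (h : ∀ k, m ≤ k → g (k + 1) - g k ≤ a (k + 1)) : g n - g m ≤ ∑ k ∈ Ioc m n, a k := by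
  have := sum_Ioc_le_sub_of_le_sub (a := -a) (g := -g) hmn fun k hk => by
    simp only [Pi.neg_apply]; linarith [h k hk]
  simp only [Pi.neg_apply, sum_neg_distrib] at this
  linarith

lemma abs_sum_inv_sub_log_le {n : ℕ} (hn : 1 ≤ n) :
    |∑ k ∈ Icc 2 n, (k : ℝ)⁻¹ - log n| ≤ log 2 := by
  rw [show Icc 2 n = Ioc 1 n from Icc_add_one_left_eq_Ioc 1 n]
  have hupper := sum_Ioc_le_sub_of_le_sub (a := fun k => (k : ℝ)⁻¹) (g := fun k => log k) hn
    fun k hk => by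
      push_cast
      exact inv_add_one_le_log_add_one_sub_log (by exact_mod_cast hk)
  have hlower := sub_le_sum_Ioc_of_sub_le (a := fun k => (k : ℝ)⁻¹)
    (g := fun k => log ((k : ℝ) + 1)) hn fun k _ => by
      push_cast
      simpa [add_assoc, one_add_one_eq_two] using
        log_add_one_sub_log_le_inv (by positivity : (0 : ℝ) < k + 1)
  have hmono : log (n : ℝ) ≤ log ((n : ℝ) + 1) :=
    log_le_log (by exact_mod_cast hn) (by linarith)
  simp only [Nat.cast_one, one_add_one_eq_two, log_one] at hupper hlower
  have hlog2 : 0 < log 2 := log_pos one_lt_two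
  rw [abs_le]
  constructor <;> linarith

lemma abs_sum_inv_mul_log_sub_log_log_le {n : ℕ} (hn : 2 ≤ n) :
    |∑ k ∈ Icc 2 n, ((k : ℝ) * log k)⁻¹ - log (log n)| ≤ (2 * log 2)⁻¹ - log (log 2) := by
  rw [show Icc 2 n = Ioc 1 n from Icc_add_one_left_eq_Ioc 1 n]
  have hlower := sub_le_sum_Ioc_of_sub_le (a := fun k => ((k : ℝ) * log k)⁻¹)
    (g := fun k => log (log ((k : ℝ) + 1))) (by omega : 1 ≤ n) fun k hk => by
      push_cast
      simpa [add_assoc, one_add_one_eq_two] using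
        log_log_add_one_sub_log_log_le (by exact_mod_cast Nat.lt_add_one_of_le hk :
          (1 : ℝ) < k + 1)
  have hupper := sum_Ioc_le_sub_of_le_sub (a := fun k => ((k : ℝ) * log k)⁻¹)
    (g := fun k => log (log k)) hn fun k hk => by
      push_cast
      exact inv_mul_log_le_log_log_add_one_sub_log_log (by exact_mod_cast hk)
  have hsplit : ∑ k ∈ Ioc 1 n, ((k : ℝ) * log k)⁻¹
      = (2 * log 2)⁻¹ + ∑ k ∈ Ioc 2 n, ((k : ℝ) * log k)⁻¹ := by
    rw [← sum_Ioc_consecutive _ (by norm_num : 1 ≤ 2) hn]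
    norm_num
  have hmono : log (log (n : ℝ)) ≤ log (log ((n : ℝ) + 1)) := by
    have h2 : (2 : ℝ) ≤ n := by exact_mod_cast hn
    gcongr
    · exact log_pos (by linarith)
    · linarith
  have hpos : 0 < (2 * log 2)⁻¹ := by positivity
  have hloglog2 : log (log 2) < 0 :=
    log_neg (log_pos one_lt_two) (log_two_lt_d9.trans (by norm_num))
  simp only [Nat.cast_ofNat, Nat.cast_one, one_add_one_eq_two] at hupper hlower
  rw [abs_le]
  constructor <;> linarith

lemma abs_sum_sub_log_add_mul_log_log_le (β : ℝ) {n : ℕ} (hn : 2 ≤ n) :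
    |∑ k ∈ Icc 2 n, ((k : ℝ)⁻¹ - β * ((k : ℝ) * log k)⁻¹) - (log n - β * log (log n))|
      ≤ log 2 + |β| * ((2 * log 2)⁻¹ - log (log 2)) := by
  rw [sum_sub_distrib, ← mul_sum,
    show ∀ a b c d : ℝ, a - β * b - (c - β * d) = (a - c) - β * (b - d) by intros; ring]
  calc _ ≤ |∑ k ∈ Icc 2 n, (k : ℝ)⁻¹ - log n|
        + |β| * |∑ k ∈ Icc 2 n, ((k : ℝ) * log k)⁻¹ - log (log n)| := by
        rw [← abs_mul]; exact abs_sub _ _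
    _ ≤ _ := by
        gcongr
        · exact abs_sum_inv_sub_log_le (by omega)
        · exact abs_sum_inv_mul_log_sub_log_log_le hn

lemma tendsto_div_log_of_abs_sub_log_add_mul_log_log_le {S : ℕ → ℝ} {β C : ℝ}
    (h : ∀ n ≥ 2, |S n - (log n - β * log (log n))| ≤ C) :
    Tendsto (fun n => S n / log n) atTop (𝓝 1) := by
  have hlog : Tendsto (fun n : ℕ => log n) atTop atTop :=
    tendsto_log_atTop.comp tendsto_natCast_atTop_atTop
  have hloglog : Tendsto (fun n : ℕ => log (log n) / log n) atTop (𝓝 0) :=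
    isLittleO_log_id_atTop.tendsto_div_nhds_zero.comp hlog
  have herr : Tendsto (fun n => (S n - (log n - β * log (log n))) / log n) atTop (𝓝 0) := by
    refine squeeze_zero_norm' ?_ ((tendsto_const_nhds (x := C)).div_atTop hlog)
    filter_upwards [eventually_ge_atTop 2, hlog.eventually_gt_atTop 0] with n hn hpos
    rw [norm_div, Real.norm_eq_abs, Real.norm_eq_abs, abs_of_pos hpos]
    gcongr
    exact h n hn
  have hsum := (tendsto_const_nhds (x := (1 : ℝ))).sub (hloglog.const_mul β) |>.add herr
  rw [mul_zero, sub_zero, add_zero] at hsum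
  refine hsum.congr' ?_
  filter_upwards [hlog.eventually_gt_atTop 0] with n hpos
  field_simp
  ring

lemma summable_inv_nat_mul_log_rpow {p : ℝ} (hp : 1 < p) :
    Summable fun n : ℕ => ((n : ℝ) * log n ^ p)⁻¹ := by
  have hpos : ∀ n : ℕ, 0 < n → 0 < ((n + 1 : ℕ) : ℝ) * log ((n + 1 : ℕ) : ℝ) ^ p := by
    intro n hn
    have : (1 : ℝ) < (n + 1 : ℕ) := by norm_cast; omega
    have := log_pos this
    positivity
  -- after the shift the sequence is antitone from index 1 on, as condensation requires
  rw [← summable_nat_add_iff 1, ← summable_condensed_iff_of_nonneg]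
  · refine Summable.of_norm_bounded_eventually_nat
      ((summable_nat_rpow_inv.2 hp).mul_left (log 2 ^ p)⁻¹) ?_
    filter_upwards [eventually_ge_atTop 1] with k hk
    have hk' : (0 : ℝ) < k := by exact_mod_cast hk
    have hlog2 : 0 < log 2 := log_pos one_lt_two
    rw [Real.norm_of_nonneg (by positivity)]
    have hlog2k : log ((2 : ℝ) ^ k) = k * log 2 := by rw [log_pow]
    push_cast
    calc (2 : ℝ) ^ k * (((2 : ℝ) ^ k + 1) * log ((2 : ℝ) ^ k + 1) ^ p)⁻¹
        ≤ 2 ^ k * ((2 : ℝ) ^ k * log ((2 : ℝ) ^ k) ^ p)⁻¹ := by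
          have : 0 < log ((2 : ℝ) ^ k) := by rw [hlog2k]; positivity
          gcongr <;> linarith
        _ = (log 2 ^ p)⁻¹ * ((k : ℝ) ^ p)⁻¹ := by
          rw [hlog2k, mul_rpow hk'.le hlog2.le]
          field_simp
  · intro n
    have : (0 : ℝ) ≤ log ((n + 1 : ℕ) : ℝ) := log_nonneg (by norm_cast; omega)
    positivity
  · intro m n hm hmn
    refine inv_anti₀ (hpos m hm) ?_
    have : (0 : ℝ) ≤ log ((m + 1 : ℕ) : ℝ) := log_nonneg (by norm_cast; omega)
    gcongr

lemma summable_inv_sq_mul_exp_of_le_log_sub_mul_log_log {S : ℕ → ℝ} {β C : ℝ} (hβ : 1 < β)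
    (h : ∀ n ≥ 2, S n ≤ log n - β * log (log n) + C) :
    Summable fun n : ℕ => 1 / (n : ℝ) ^ 2 * exp (S n) := by
  refine Summable.of_norm_bounded_eventually_nat
    ((summable_inv_nat_mul_log_rpow hβ).mul_left (exp C)) ?_
  filter_upwards [eventually_ge_atTop 2] with n hn
  have hn' : (2 : ℝ) ≤ n := by exact_mod_cast hn
  have hlog : 0 < log (n : ℝ) := log_pos (by linarith)
  have hexp : exp (log n - β * log (log n) + C) = n * exp C / log n ^ β := by
    rw [exp_add, exp_sub, exp_log (by linarith), rpow_def_of_pos hlog, mul_comm β]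
    ring
  rw [Real.norm_of_nonneg (by positivity)]
  calc 1 / (n : ℝ) ^ 2 * exp (S n) ≤ 1 / (n : ℝ) ^ 2 * exp (log n - β * log (log n) + C) := by
        gcongr; exact h n hn
    _ = exp C * ((n : ℝ) * log n ^ β)⁻¹ := by
        rw [hexp]; field_simp

end

theorem stmt9 (β : ℝ) (hβ : 1 < β)
    (ℓ : ℕ → ℝ) (hℓ : ∀ n ≥ 2, ℓ n = 1 / (n : ℝ) - β / ((n : ℝ) * Real.log n)) :
    Filter.limsup
        (fun n : ℕ => (∑ k ∈ Finset.Icc 2 n, ℓ k) / Real.log n) atTop = 1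
    ∧ Summable (fun n : ℕ =>
        (1 / (n : ℝ) ^ 2) * Real.exp (∑ k ∈ Finset.Icc 2 n, ℓ k)) := by
  have hsum : ∀ n, ∑ k ∈ Icc 2 n, ℓ k
      = ∑ k ∈ Icc 2 n, ((k : ℝ)⁻¹ - β * ((k : ℝ) * Real.log k)⁻¹) :=
    fun n => sum_congr rfl fun k hk => by rw [hℓ k (mem_Icc.1 hk).1]; ring
  have hbound := fun n (hn : n ≥ 2) => abs_sum_sub_log_add_mul_log_log_le β hn
  simp only [hsum]
  exact ⟨(tendsto_div_log_of_abs_sub_log_add_mul_log_log_le hbound).limsup_eq,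
    summable_inv_sq_mul_exp_of_le_log_sub_mul_log_log hβ fun n hn =>
      sub_le_iff_le_add'.1 (abs_sub_le_iff.1 (hbound n hn)).1⟩
end

section
/- There exists a compact set $A \subset [0,1]$ of Lebesgue measure zero and Hausdorff dimension $1$, together with a Borel probability measure $\sigma_0$ supported on $A$ and a constant $c_0>0$, such that for every interval $B\subset[0,1]$ with $0 < |B| < 1/2$ one has $\sigma_0(B) \leq c_0 \, |\ln |B|| \cdot |B|$. -/
/-!
`A` is the image of the coin-tossing space `ℕ → Bool` under `ω ↦ ∑ ω n (L n - L (n + 1))` with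
`L n = 2⁻ⁿ / (n + 1)`, and `σ₀` is the image of the fair coin-tossing measure. A cylinder fixing
the first `k` coins is mapped into an interval of length `L k`, and the left endpoints of these
intervals are `L k` apart. So an interval of length `δ` meets at most `δ / L k + 2` of the `2ᵏ`
cylinders, each of mass `2⁻ᵏ`; taking `2⁻ᵏ ≈ δ` gives `σ₀ ≤ δ (k + 1) + 2 · 2⁻ᵏ ≲ δ |log δ|`.
The same cover gives `volume A ≤ 2ᵏ L k = 1 / (k + 1)`, and since `δ |log δ| ≲ δ ^ d` for every
`d < 1`, the mass distribution principle gives `dimH A = 1`.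
-/

open MeasureTheory Filter Topology Set Metric
open scoped ENNReal NNReal

lemma Finset.card_mul_le_of_separated {ι : Type*} (s : Finset ι) {f : ι → ℝ} {ℓ a b : ℝ}
    (hℓ : 0 ≤ ℓ) (hab : a ≤ b) (hf : ∀ i ∈ s, f i ∈ Set.Icc a b)
    (hsep : ∀ i ∈ s, ∀ j ∈ s, i ≠ j → ℓ ≤ |f i - f j|) :
    s.card * ℓ ≤ b - a + ℓ := by
  have hdisj : (s : Set ι).PairwiseDisjoint fun i => Set.Ioo (f i) (f i + ℓ) := by
    intro i hi j hj hij
    refine Set.disjoint_left.2 fun x hxi hxj => ?_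
    have hlt : |f i - f j| < ℓ :=
      abs_sub_lt_iff.2 ⟨by linarith [hxi.1, hxj.2], by linarith [hxi.2, hxj.1]⟩
    exact (hsep i hi j hj hij).not_gt hlt
  have hsub : ⋃ i ∈ s, Set.Ioo (f i) (f i + ℓ) ⊆ Set.Ioo a (b + ℓ) := by
    simp only [iUnion_subset_iff]
    intro i hi x hx
    exact ⟨(hf i hi).1.trans_lt hx.1, by linarith [(hf i hi).2, hx.2]⟩
  have hvol : ENNReal.ofReal (s.card * ℓ) ≤ ENNReal.ofReal (b + ℓ - a) := calc
    ENNReal.ofReal (s.card * ℓ) = ∑ i ∈ s, volume (Set.Ioo (f i) (f i + ℓ)) := by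
      simp [Real.volume_Ioo, ENNReal.ofReal_mul]
    _ = volume (⋃ i ∈ s, Set.Ioo (f i) (f i + ℓ)) :=
      (measure_biUnion_finset hdisj fun _ _ => measurableSet_Ioo).symm
    _ ≤ ENNReal.ofReal (b + ℓ - a) := by rw [← Real.volume_Ioo]; exact measure_mono hsub
  linarith [(ENNReal.ofReal_le_ofReal_iff (by linarith)).1 hvol]

lemma MeasureTheory.Measure.le_ediam_rpow_of_closedBall_le {X : Type*} [MetricSpace X]
    [MeasurableSpace X] (ν : Measure X) {d C r : ℝ} (hd : 0 ≤ d)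
    (h : ∀ x ρ, 0 < ρ → ρ < r → ν (closedBall x ρ) ≤ ENNReal.ofReal (C * ρ ^ d))
    {t : Set X} (ht : ediam t < ENNReal.ofReal r) :
    ν t ≤ ENNReal.ofReal C * ediam t ^ d := by
  rcases t.eq_empty_or_nonempty with rfl | ⟨x, hx⟩
  · simp
  have hbdd : Bornology.IsBounded t := isBounded_iff_ediam_ne_top.2 ht.ne_top
  have hD : ediam t = ENNReal.ofReal (diam t) := (ENNReal.ofReal_toReal hbdd.ediam_ne_top).symm
  have hDr : diam t < r := by
    rw [hD] at ht; exact (ENNReal.ofReal_lt_ofReal_iff'.1 ht).1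
  have hlim : Tendsto (fun ρ => ENNReal.ofReal (C * ρ ^ d)) (𝓝[>] diam t)
      (𝓝 (ENNReal.ofReal (C * diam t ^ d))) :=
    ((ENNReal.continuous_ofReal.comp
      (continuous_const.mul (Real.continuous_rpow_const hd))).tendsto _).mono_left
      nhdsWithin_le_nhds
  have hbound : ν t ≤ ENNReal.ofReal (C * diam t ^ d) := by
    refine ge_of_tendsto hlim ?_
    filter_upwards [Ioo_mem_nhdsGT hDr] with ρ hρ
    refine (measure_mono fun y hy => ?_).trans (h x ρ (diam_nonneg.trans_lt hρ.1) hρ.2)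
    exact (dist_le_diam_of_mem hbdd hy hx).trans hρ.1.le
  rwa [hD, ENNReal.ofReal_rpow_of_nonneg diam_nonneg hd,
    ← ENNReal.ofReal_mul' (Real.rpow_nonneg diam_nonneg d)]

theorem le_dimH_of_measure_closedBall_le {X : Type*} [MetricSpace X] [MeasurableSpace X]
    [BorelSpace X] (ν : Measure X) {s : Set X} (hs : ν s ≠ 0)
    {d : ℝ≥0} {C r : ℝ} (hr : 0 < r)
    (h : ∀ x ρ, 0 < ρ → ρ < r → ν (closedBall x ρ) ≤ ENNReal.ofReal (C * ρ ^ (d : ℝ))) :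
    (d : ℝ≥0∞) ≤ dimH s := by
  set c := ENNReal.ofReal C
  have hle : c⁻¹ • ν ≤ μH[d] := by
    refine Measure.le_hausdorffMeasure _ _ (ENNReal.ofReal (r / 2)) (by simp [hr]) fun t ht => ?_
    have hνt : ν t ≤ c * ediam t ^ (d : ℝ) := ν.le_ediam_rpow_of_closedBall_le d.2 h
      (ht.trans_lt ((ENNReal.ofReal_lt_ofReal_iff hr).2 (half_lt_self hr)))
    rw [Measure.smul_apply, smul_eq_mul]
    rcases eq_or_ne c 0 with hc | hc
    · rw [hc, zero_mul, nonpos_iff_eq_zero] at hνt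
      simp [hνt]
    · exact (ENNReal.inv_mul_le_iff hc ENNReal.ofReal_ne_top).2 hνt
  refine le_dimH_of_hausdorffMeasure_ne_zero fun h0 => hs ?_
  simpa [h0, c] using hle s

lemma Real.abs_log_mul_le_rpow_div {t d : ℝ} (ht₀ : 0 < t) (ht₁ : t ≤ 1) (hd : d < 1) :
    |Real.log t| * t ≤ t ^ d / (1 - d) := by
  have := Real.abs_log_mul_self_rpow_lt t (1 - d) ht₀ ht₁ (by linarith)
  calc |Real.log t| * t = |Real.log t * t ^ (1 - d)| * t ^ d := by
        rw [abs_mul, abs_of_pos (Real.rpow_pos_of_pos ht₀ _), mul_assoc, ← Real.rpow_add ht₀,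
          sub_add_cancel, Real.rpow_one]
    _ ≤ 1 / (1 - d) * t ^ d := by gcongr
    _ = t ^ d / (1 - d) := by ring

namespace CantorSeries

structure IsCantorScale (L : ℕ → ℝ) : Prop where
  pos : ∀ n, 0 < L n
  two_mul_succ_le : ∀ n, 2 * L (n + 1) ≤ L n

variable {L : ℕ → ℝ}

def digitWeight (L : ℕ → ℝ) (n : ℕ) : ℝ := L n - L (n + 1)

def digitTerm (L : ℕ → ℝ) (ω : ℕ → Bool) (n : ℕ) : ℝ :=
  if ω n then digitWeight L n else 0

def partialSum (L : ℕ → ℝ) (ω : ℕ → Bool) (k : ℕ) : ℝ :=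
  ∑ n ∈ Finset.range k, digitTerm L ω n

/-- `ω n` chooses the left or right subinterval at level `n`; the level-`k` interval of `ω` is
`[partialSum L ω k, partialSum L ω k + L k]` (see `cantorSum_mem_Icc`). -/
noncomputable def cantorSum (L : ℕ → ℝ) (ω : ℕ → Bool) : ℝ := ∑' n, digitTerm L ω n

lemma sum_digitWeight_Ico (L : ℕ → ℝ) {j k : ℕ} (h : j ≤ k) :
    ∑ n ∈ Finset.Ico j k, digitWeight L n = L j - L k := by
  simpa only [neg_sub_neg, digitWeight] using Finset.sum_Ico_sub (fun n => -L n) h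

lemma digitWeight_nonneg (hL : IsCantorScale L) (n : ℕ) : 0 ≤ digitWeight L n := by
  unfold digitWeight
  linarith [hL.two_mul_succ_le n, hL.pos (n + 1)]

lemma digitTerm_nonneg (hL : IsCantorScale L) (ω : ℕ → Bool) (n : ℕ) :
    0 ≤ digitTerm L ω n := by
  unfold digitTerm; split_ifs <;> simp [digitWeight_nonneg hL n]

lemma digitTerm_le (hL : IsCantorScale L) (ω : ℕ → Bool) (n : ℕ) :
    digitTerm L ω n ≤ digitWeight L n := by
  unfold digitTerm; split_ifs <;> simp [digitWeight_nonneg hL n]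

lemma tsum_digitTerm_add_le (hL : IsCantorScale L) (ω : ℕ → Bool) (k : ℕ) :
    ∑' n, digitTerm L ω (n + k) ≤ L k := by
  refine Real.tsum_le_of_sum_range_le (fun n => digitTerm_nonneg hL ω _) fun N => ?_
  calc ∑ n ∈ Finset.range N, digitTerm L ω (n + k)
      ≤ ∑ n ∈ Finset.Ico k (N + k), digitWeight L n := by
        rw [Finset.sum_Ico_eq_sum_range, Nat.add_sub_cancel]
        exact Finset.sum_le_sum fun n _ => by rw [add_comm]; exact digitTerm_le hL ω _
    _ = L k - L (N + k) := sum_digitWeight_Ico L (by omega)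
    _ ≤ L k := by linarith [hL.pos (N + k)]

lemma summable_digitTerm (hL : IsCantorScale L) (ω : ℕ → Bool) :
    Summable (digitTerm L ω) := by
  refine summable_of_sum_range_le (c := L 0) (fun n => digitTerm_nonneg hL ω n) fun N => ?_
  calc ∑ n ∈ Finset.range N, digitTerm L ω n ≤ ∑ n ∈ Finset.range N, digitWeight L n :=
        Finset.sum_le_sum fun n _ => digitTerm_le hL ω n
    _ = L 0 - L N := by rw [Finset.range_eq_Ico]; exact sum_digitWeight_Ico L (Nat.zero_le N)
    _ ≤ L 0 := by linarith [hL.pos N]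

lemma cantorSum_mem_Icc (hL : IsCantorScale L) (ω : ℕ → Bool) (k : ℕ) :
    cantorSum L ω ∈ Icc (partialSum L ω k) (partialSum L ω k + L k) := by
  rw [cantorSum, ← (summable_digitTerm hL ω).sum_add_tsum_nat_add k, partialSum]
  have htail : 0 ≤ ∑' n, digitTerm L ω (n + k) :=
    tsum_nonneg fun n => digitTerm_nonneg hL ω (n + k)
  have := tsum_digitTerm_add_le hL ω k
  constructor <;> linarith

lemma continuous_cantorSum (hL : IsCantorScale L) : Continuous (cantorSum L) := by
  refine continuous_tsum (fun n => ?_) (summable_digitTerm hL fun _ => true) fun n ω => ?_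
  · exact (continuous_of_discreteTopology
      (f := fun b : Bool => if b then digitWeight L n else 0)).comp (continuous_apply n)
  · rw [Real.norm_of_nonneg (digitTerm_nonneg hL ω n)]
    simpa [digitTerm] using digitTerm_le hL ω n

lemma partialSum_congr {ω ω' : ℕ → Bool} {k : ℕ}
    (h : (Finset.range k).restrict ω = (Finset.range k).restrict ω') :
    partialSum L ω k = partialSum L ω' k :=
  Finset.sum_congr rfl fun n hn => by
    simp only [digitTerm, show ω n = ω' n from congrFun h ⟨n, hn⟩]

lemma abs_cantorSum_sub_le (hL : IsCantorScale L) {ω ω' : ℕ → Bool} {k : ℕ}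
    (h : (Finset.range k).restrict ω = (Finset.range k).restrict ω') :
    |cantorSum L ω - cantorSum L ω'| ≤ L k := by
  obtain ⟨h₁, h₂⟩ := cantorSum_mem_Icc hL ω k
  obtain ⟨h₃, h₄⟩ := cantorSum_mem_Icc hL ω' k
  rw [partialSum_congr h] at h₁ h₂
  exact abs_sub_le_iff.2 ⟨by linarith, by linarith⟩

lemma partialSum_add_le_of_first_diff (hL : IsCantorScale L) {ω ω' : ℕ → Bool} {j k : ℕ}
    (hjk : j < k) (hagree : ∀ n < j, ω n = ω' n) (hj : ω j = false) (hj' : ω' j = true) :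
    partialSum L ω k + L k ≤ partialSum L ω' k := by
  have hsplit : ∀ υ : ℕ → Bool, partialSum L υ k = ∑ n ∈ Finset.range j, digitTerm L υ n
      + digitTerm L υ j + ∑ n ∈ Finset.Ico (j + 1) k, digitTerm L υ n := fun υ => by
    rw [partialSum, ← Finset.sum_range_add_sum_Ico _ hjk.le,
      Finset.sum_eq_sum_Ico_succ_bot hjk, add_assoc]
  have hprefix :
      ∑ n ∈ Finset.range j, digitTerm L ω n = ∑ n ∈ Finset.range j, digitTerm L ω' n :=
    Finset.sum_congr rfl fun n hn => by simp only [digitTerm, hagree n (Finset.mem_range.1 hn)]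
  have htail : ∑ n ∈ Finset.Ico (j + 1) k, digitTerm L ω n ≤ L (j + 1) - L k := by
    rw [← sum_digitWeight_Ico L hjk]
    exact Finset.sum_le_sum fun n _ => digitTerm_le hL ω n
  have htail' : 0 ≤ ∑ n ∈ Finset.Ico (j + 1) k, digitTerm L ω' n :=
    Finset.sum_nonneg fun n _ => digitTerm_nonneg hL ω' n
  have hω : digitTerm L ω j = 0 := by simp [digitTerm, hj]
  have hω' : digitTerm L ω' j = L j - L (j + 1) := by simp [digitTerm, digitWeight, hj']
  rw [hsplit ω, hsplit ω', hprefix, hω, hω']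
  linarith [hL.two_mul_succ_le j]

lemma le_abs_partialSum_sub (hL : IsCantorScale L) {ω ω' : ℕ → Bool} {k : ℕ}
    (h : (Finset.range k).restrict ω ≠ (Finset.range k).restrict ω') :
    L k ≤ |partialSum L ω k - partialSum L ω' k| := by
  classical
  have hex : ∃ n, n < k ∧ ω n ≠ ω' n := by
    by_contra! hc
    exact h (funext fun n => hc n (Finset.mem_range.1 n.2))
  set j := Nat.find hex
  obtain ⟨hjk, hj⟩ : j < k ∧ ω j ≠ ω' j := Nat.find_spec hex
  have hagree : ∀ n < j, ω n = ω' n := fun n hn => by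
    by_contra hne
    exact Nat.find_min hex hn ⟨hn.trans hjk, hne⟩
  cases hω : ω j <;> cases hω' : ω' j
  · exact absurd (hω.trans hω'.symm) hj
  · have := partialSum_add_le_of_first_diff hL hjk hagree hω hω'
    rw [abs_sub_comm, abs_of_nonneg] <;> linarith [hL.pos k]
  · have := partialSum_add_le_of_first_diff hL hjk (fun n hn => (hagree n hn).symm) hω' hω
    rw [abs_of_nonneg] <;> linarith [hL.pos k]
  · exact absurd (hω.trans hω'.symm) hj

noncomputable def coinToss : Measure (ℕ → Bool) :=
  Measure.infinitePi fun _ => (PMF.uniformOfFintype Bool).toMeasure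

instance : IsProbabilityMeasure coinToss := by unfold coinToss; infer_instance

lemma coinToss_cylinder_singleton (s : Finset ℕ) (p : s → Bool) :
    coinToss (cylinder s {p}) = 2⁻¹ ^ s.card := by
  rw [coinToss, Measure.infinitePi_cylinder _ (measurableSet_singleton p), Measure.pi_singleton]
  simp [PMF.uniformOfFintype_apply]

noncomputable def cantorMeasure (L : ℕ → ℝ) : Measure ℝ := coinToss.map (cantorSum L)

lemma cantorMeasure_Icc_le (hL : IsCantorScale L) (k : ℕ) {a b : ℝ} (hab : a ≤ b) :
    cantorMeasure L (Icc a b) ≤ ENNReal.ofReal ((b - a + 2 * L k) / L k * 2⁻¹ ^ k) := by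
  classical
  set P := Finset.univ.filter fun p : (Finset.range k → Bool) =>
    ∃ ω, (Finset.range k).restrict ω = p ∧ cantorSum L ω ∈ Icc a b
  have hcover : cantorSum L ⁻¹' Icc a b ⊆ ⋃ p ∈ P, cylinder (Finset.range k) {p} :=
    fun ω hω => mem_biUnion (Finset.mem_filter.2 ⟨Finset.mem_univ _, ω, rfl, hω⟩) rfl
  have hcard : (P.card : ℝ) * L k ≤ b - a + 2 * L k := by
    choose! w hw using fun p (hp : p ∈ P) => (Finset.mem_filter.1 hp).2
    have hf : ∀ p ∈ P, partialSum L (w p) k ∈ Icc (a - L k) b := fun p hp => by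
      obtain ⟨h₁, h₂⟩ := cantorSum_mem_Icc hL (w p) k
      obtain ⟨h₃, h₄⟩ := (hw p hp).2
      exact ⟨by linarith, by linarith⟩
    have := Finset.card_mul_le_of_separated P (hL.pos k).le (by linarith [hL.pos k]) hf
      fun p hp q hq hpq => le_abs_partialSum_sub hL (by rwa [(hw p hp).1, (hw q hq).1])
    linarith
  calc cantorMeasure L (Icc a b) = coinToss (cantorSum L ⁻¹' Icc a b) :=
        Measure.map_apply (continuous_cantorSum hL).measurable measurableSet_Icc
    _ ≤ ∑ p ∈ P, coinToss (cylinder (Finset.range k) {p}) :=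
        (measure_mono hcover).trans (measure_biUnion_finset_le _ _)
    _ = ENNReal.ofReal (P.card * 2⁻¹ ^ k) := by
        simp [coinToss_cylinder_singleton, ENNReal.ofReal_mul, ENNReal.ofReal_pow,
          ENNReal.ofReal_inv_of_pos, ENNReal.inv_pow]
    _ ≤ ENNReal.ofReal ((b - a + 2 * L k) / L k * 2⁻¹ ^ k) := by
        gcongr
        exact (le_div_iff₀ (hL.pos k)).2 hcard

lemma volume_range_cantorSum_le (hL : IsCantorScale L) (k : ℕ) :
    volume (range (cantorSum L)) ≤ 2 ^ k * ENNReal.ofReal (L k) := by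
  have hcover : range (cantorSum L) ⊆
      ⋃ p : (Finset.range k → Bool), cantorSum L '' cylinder (Finset.range k) {p} := by
    rintro _ ⟨ω, rfl⟩
    exact mem_iUnion.2 ⟨_, ω, rfl, rfl⟩
  have hpiece (p : Finset.range k → Bool) :
      volume (cantorSum L '' cylinder (Finset.range k) {p}) ≤ ENNReal.ofReal (L k) :=
    (Real.volume_le_diam _).trans <| ediam_le_of_forall_dist_le <| by
      rintro _ ⟨ω, hω, rfl⟩ _ ⟨ω', hω', rfl⟩
      exact abs_cantorSum_sub_le hL (hω.trans hω'.symm)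
  calc volume (range (cantorSum L))
      ≤ ∑ p : (Finset.range k → Bool), volume (cantorSum L '' cylinder (Finset.range k) {p}) :=
        (measure_mono hcover).trans (measure_iUnion_fintype_le _ _)
    _ ≤ ∑ _p : (Finset.range k → Bool), ENNReal.ofReal (L k) :=
        Finset.sum_le_sum fun p _ => hpiece p
    _ = 2 ^ k * ENNReal.ofReal (L k) := by simp

lemma isCompact_range_cantorSum (hL : IsCantorScale L) : IsCompact (range (cantorSum L)) :=
  isCompact_range (continuous_cantorSum hL)

lemma range_cantorSum_subset (hL : IsCantorScale L) : range (cantorSum L) ⊆ Icc 0 (L 0) := by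
  rintro _ ⟨ω, rfl⟩
  simpa [partialSum] using cantorSum_mem_Icc hL ω 0

lemma isProbabilityMeasure_cantorMeasure (hL : IsCantorScale L) :
    IsProbabilityMeasure (cantorMeasure L) :=
  Measure.isProbabilityMeasure_map (continuous_cantorSum hL).aemeasurable

lemma cantorMeasure_compl_range (hL : IsCantorScale L) :
    cantorMeasure L (range (cantorSum L))ᶜ = 0 := by
  rw [cantorMeasure, Measure.map_apply (continuous_cantorSum hL).measurable
    (isCompact_range_cantorSum hL).isClosed.measurableSet.compl]
  simp

lemma cantorMeasure_range (hL : IsCantorScale L) : cantorMeasure L (range (cantorSum L)) = 1 :=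
  have := isProbabilityMeasure_cantorMeasure hL
  (prob_compl_eq_zero_iff (isCompact_range_cantorSum hL).measurableSet).1
    (cantorMeasure_compl_range hL)

/-- Passing from level `k` to level `k + 1` removes the middle portion of relative length
`1 - 2 L (k + 1) / L k = 1 / (k + 2)` of each interval. -/
noncomputable def logScale (n : ℕ) : ℝ := 2⁻¹ ^ n / (n + 1)

lemma isCantorScale_logScale : IsCantorScale logScale where
  pos n := by unfold logScale; positivity
  two_mul_succ_le n := by
    have : 2 * logScale (n + 1) = 2⁻¹ ^ n / (n + 2) := by
      unfold logScale; push_cast; ring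
    rw [this, logScale]
    gcongr
    linarith

lemma cantorMeasure_logScale_Icc_le (k : ℕ) {a b : ℝ} (hab : a ≤ b) :
    cantorMeasure logScale (Icc a b) ≤ ENNReal.ofReal ((b - a) * (k + 1) + 2 * 2⁻¹ ^ k) := by
  refine (cantorMeasure_Icc_le isCantorScale_logScale k hab).trans_eq (congrArg _ ?_)
  unfold logScale
  field_simp

lemma cantorMeasure_logScale_Icc_le_log {a b : ℝ} (hab : a < b) (hba : b - a < 1 / 2) :
    cantorMeasure logScale (Icc a b) ≤ ENNReal.ofReal (8 * |Real.log (b - a)| * (b - a)) := by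
  set δ := b - a
  have hδ : 0 < δ := sub_pos.2 hab
  obtain ⟨n, hlt, hle⟩ := exists_nat_pow_near_of_lt_one hδ (by linarith)
    (by norm_num : (0 : ℝ) < 2⁻¹) (by norm_num)
  have hn : (1 : ℝ) ≤ n := by
    rcases n with _ | n
    · norm_num at hlt; linarith
    · simp
  have hlog : n * Real.log 2 ≤ |Real.log δ| := calc
    n * Real.log 2 = -Real.log (2⁻¹ ^ n) := by rw [Real.log_pow, Real.log_inv]; ring
    _ ≤ -Real.log δ := neg_le_neg (Real.log_le_log hδ hle)
    _ ≤ |Real.log δ| := neg_le_abs _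
  refine (cantorMeasure_logScale_Icc_le (n + 1) hab.le).trans (ENNReal.ofReal_le_ofReal ?_)
  have hn4 : (n : ℝ) + 4 ≤ 8 * (n * Real.log 2) := by nlinarith [Real.log_two_gt_d9]
  calc δ * ((n + 1 : ℕ) + 1) + 2 * 2⁻¹ ^ (n + 1) ≤ δ * (n + 4) := by
        push_cast; nlinarith
    _ ≤ 8 * (n * Real.log 2) * δ := by nlinarith
    _ ≤ 8 * |Real.log δ| * δ := by gcongr

lemma cantorMeasure_logScale_closedBall_le {d : ℝ} (hd : d < 1) (x : ℝ) {ρ : ℝ} (hρ₀ : 0 < ρ)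
    (hρ : ρ < 1 / 4) :
    cantorMeasure logScale (closedBall x ρ) ≤ ENNReal.ofReal (16 / (1 - d) * ρ ^ d) := by
  rw [Real.closedBall_eq_Icc]
  refine (cantorMeasure_logScale_Icc_le_log (by linarith) (by linarith)).trans
    (ENNReal.ofReal_le_ofReal ?_)
  rw [show x + ρ - (x - ρ) = 2 * ρ by ring]
  have h2d : (2 * ρ) ^ d ≤ 2 * ρ ^ d := by
    rw [Real.mul_rpow zero_le_two hρ₀.le]
    gcongr
    simpa using Real.rpow_le_rpow_of_exponent_le one_le_two hd.le
  have h1d : 0 < 1 - d := by linarith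
  calc 8 * |Real.log (2 * ρ)| * (2 * ρ) = 8 * (|Real.log (2 * ρ)| * (2 * ρ)) := by ring
    _ ≤ 8 * ((2 * ρ) ^ d / (1 - d)) := by
        gcongr; exact Real.abs_log_mul_le_rpow_div (by positivity) (by linarith) hd
    _ ≤ 8 * (2 * ρ ^ d / (1 - d)) := by gcongr
    _ = 16 / (1 - d) * ρ ^ d := by ring

lemma dimH_range_cantorSum_logScale : dimH (range (cantorSum logScale)) = 1 := by
  refine le_antisymm ((dimH_mono (subset_univ _)).trans_eq Real.dimH_univ)
    (ENNReal.le_of_forall_nnreal_lt fun d hd => ?_)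
  have hd1 : (d : ℝ) < 1 := by exact_mod_cast hd
  exact le_dimH_of_measure_closedBall_le (cantorMeasure logScale)
    (by simp [cantorMeasure_range isCantorScale_logScale]) (by norm_num : (0 : ℝ) < 1 / 4)
    fun x ρ hρ₀ hρ => cantorMeasure_logScale_closedBall_le hd1 x hρ₀ hρ

lemma volume_range_cantorSum_logScale : volume (range (cantorSum logScale)) = 0 := by
  have h : ∀ k : ℕ, 2 ^ k * ENNReal.ofReal (logScale k) = ENNReal.ofReal (1 / (k + 1)) := by
    intro k
    rw [← ENNReal.ofReal_ofNat 2, ← ENNReal.ofReal_pow zero_le_two,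
      ← ENNReal.ofReal_mul (by positivity), logScale, ← mul_div_assoc, ← mul_pow]
    norm_num
  have hlim : Tendsto (fun k : ℕ => 2 ^ k * ENNReal.ofReal (logScale k)) atTop (𝓝 0) := by
    simpa [h] using ENNReal.tendsto_ofReal tendsto_one_div_add_atTop_nhds_zero_nat
  exact le_antisymm
    (ge_of_tendsto' hlim (volume_range_cantorSum_le isCantorScale_logScale)) zero_le

end CantorSeries

theorem stmt11 :
    ∃ (A : Set ℝ) (σ₀ : Measure ℝ) (c₀ : ℝ),
      A ⊆ Set.Icc 0 1 ∧ IsCompact A ∧ volume A = 0 ∧ dimH A = 1 ∧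
      IsProbabilityMeasure σ₀ ∧ σ₀ Aᶜ = 0 ∧ 0 < c₀ ∧
      ∀ a b : ℝ, a < b → b - a < 1 / 2 → Set.Icc a b ⊆ Set.Icc 0 1 →
        σ₀ (Set.Icc a b) ≤ ENNReal.ofReal (c₀ * |Real.log (b - a)| * (b - a)) := by
  open CantorSeries in
  refine ⟨range (cantorSum logScale), cantorMeasure logScale, 8, ?_,
    isCompact_range_cantorSum isCantorScale_logScale, volume_range_cantorSum_logScale,
    dimH_range_cantorSum_logScale, isProbabilityMeasure_cantorMeasure isCantorScale_logScale,
    cantorMeasure_compl_range isCantorScale_logScale, by norm_num,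
    fun a b hab hba _ => cantorMeasure_logScale_Icc_le_log hab hba⟩
  simpa [CantorSeries.logScale] using
    CantorSeries.range_cantorSum_subset CantorSeries.isCantorScale_logScale
end

section
/- Let $\{\ell_n\}$ be decreasing with $0<\ell_n<1$ and suppose $\sum_{n=1}^\infty n^{-2} e^{a(\ell_1+\cdots+\ell_n)} < \infty$ for some $a>0$. Then $\sum_{n=1}^\infty \ell_n^2 < \infty$. -/
open Finset Filter Real

/-!
The terms of a convergent series tend to zero, so eventually `exp (a (ℓ₁ + ⋯ + ℓₙ)) ≤ n²`, i.e.
`a (ℓ₁ + ⋯ + ℓₙ) ≤ 2 log n`. Since `ℓ` is non-increasing, `n ℓₙ ≤ ℓ₁ + ⋯ + ℓₙ`, hence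
`ℓₙ ≤ (2 / a) log n / n`, and `(log n / n)² ≤ 16 n^(-3/2)` is summable.
-/

theorem Antitone.card_nsmul_le_sum_Icc {β : Type*} [AddCommMonoid β] [PartialOrder β]
    [IsOrderedAddMonoid β] {f : ℕ → β} (hf : Antitone f) (n : ℕ) :
    n • f n ≤ ∑ k ∈ Icc 1 n, f k := by
  simpa using card_nsmul_le_sum (Icc 1 n) f (f n) fun k hk => hf (mem_Icc.mp hk).2

theorem log_natCast_div_le_rpow (n : ℕ) : log n / n ≤ 4 * (n : ℝ) ^ (-(3 / 4) : ℝ) := by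
  rcases n.eq_zero_or_pos with rfl | hn
  · simp
  have hn' : (n : ℝ) ≠ 0 := by positivity
  calc log n / n ≤ (n : ℝ) ^ (1 / 4 : ℝ) / (1 / 4) / n := by
        gcongr; exact log_natCast_le_rpow_div n (by norm_num)
    _ = 4 * (n : ℝ) ^ (-(3 / 4) : ℝ) := by
        rw [show (-(3 / 4) : ℝ) = 1 / 4 - 1 by norm_num, rpow_sub_one hn']; ring

theorem summable_log_natCast_div_sq : Summable fun n : ℕ => (log n / n) ^ 2 := by
  refine Summable.of_nonneg_of_le (fun n => sq_nonneg _) (fun n => ?_)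
    ((summable_nat_rpow.mpr (by norm_num : -(3 / 2 : ℝ) < -1)).mul_left 16)
  have h0 : 0 ≤ log n / n := div_nonneg (log_natCast_nonneg n) n.cast_nonneg
  calc (log n / n) ^ 2 ≤ (4 * (n : ℝ) ^ (-(3 / 4) : ℝ)) ^ 2 := by
        gcongr; exact log_natCast_div_le_rpow n
    _ = 16 * (n : ℝ) ^ (-(3 / 2) : ℝ) := by
        rw [mul_pow, ← rpow_natCast ((n : ℝ) ^ _), ← rpow_mul n.cast_nonneg]; norm_num

theorem eventually_le_two_mul_log_of_summable {s : ℕ → ℝ}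
    (h : Summable fun n : ℕ => 1 / (n : ℝ) ^ 2 * exp (s n)) :
    ∀ᶠ n : ℕ in atTop, s n ≤ 2 * log n := by
  filter_upwards [h.tendsto_atTop_zero.eventually (eventually_le_nhds one_pos),
    eventually_gt_atTop 0] with n hle hn
  have hn2 : (0 : ℝ) < (n : ℝ) ^ 2 := by positivity
  rw [one_div, inv_mul_le_iff₀ hn2, mul_one, ← le_log_iff_exp_le hn2, log_pow] at hle
  exact_mod_cast hle

theorem stmt13_general (ℓ : ℕ → ℝ) (hdec : Antitone ℓ) (hpos : ∀ n, 0 < ℓ n)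
    (a : ℝ) (ha : 0 < a)
    (hsum : Summable (fun n : ℕ =>
      (1 / (n : ℝ) ^ 2) * Real.exp (a * ∑ k ∈ Finset.Icc 1 n, ℓ k))) :
    Summable (fun n : ℕ => (ℓ n) ^ 2) := by
  have hbound : ∀ᶠ n : ℕ in atTop, ℓ n ≤ 2 / a * (log n / n) := by
    filter_upwards [eventually_le_two_mul_log_of_summable hsum, eventually_gt_atTop 0]
      with n hlog hn
    have hmean : (n : ℝ) * ℓ n ≤ ∑ k ∈ Icc 1 n, ℓ k := by
      simpa using hdec.card_nsmul_le_sum_Icc n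
    rw [div_mul_div_comm, le_div_iff₀ (by positivity)]
    linarith [mul_le_mul_of_nonneg_left hmean ha.le]
  refine (summable_log_natCast_div_sq.mul_left ((2 / a) ^ 2)).of_norm_bounded_eventually_nat ?_
  filter_upwards [hbound] with n hn
  rw [norm_pow, norm_of_nonneg (hpos n).le, ← mul_pow]
  gcongr
  exact (hpos n).le

theorem stmt13 (ℓ : ℕ → ℝ) (hdec : Antitone ℓ) (hpos : ∀ n, 0 < ℓ n) (hlt : ∀ n, ℓ n < 1)
    (a : ℝ) (ha : 0 < a)
    (hsum : Summable (fun n : ℕ =>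
      (1 / (n : ℝ) ^ 2) * Real.exp (a * ∑ k ∈ Finset.Icc 1 n, ℓ k))) :
    Summable (fun n : ℕ => (ℓ n) ^ 2) :=
  stmt13_general ℓ hdec hpos a ha hsum
end

section
/- Let $\{\ell_n\}$ satisfy $\limsup_{n\to\infty}(\ell_1+\cdots+\ell_n)/\ln n \geq 1/m$ with $m>0$. Then for every $\varepsilon>0$ and every integer $r\geq 1$ with $\frac{(1-\varepsilon)}{m}(1-2^{-r}) \cdot a > 1$ for a given $a > m$, the tail sums $\sum_{n=(2^r-1)q+1}^{2^r q} n^{-2} e^{a(\ell_1+\cdots+\ell_n)}$ are unbounded as $q$ ranges over a suitable subsequence; in particular $\sum_{n=1}^\infty n^{-2} e^{a(\ell_1+\cdots+\ell_n)} = \infty$ for every $a>m$. -/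
/-!
Write `S n = ℓ 1 + ⋯ + ℓ n`. Since `ℓ` is antitone, the averages `S n / n` decrease, so
`S ((2^r - 1) q) ≥ (1 - 2^{-r}) S (2^r q)`. Along the integers `q` with `S q ≥ c log q`,
`c = (1 - ε) / m`, every one of the `q` terms of the dyadic block `(2^r - 1) q < n ≤ 2^r q` is
therefore at least `q^b / (2^r q)^2` with `b = c (1 - 2^{-r}) a > 1`, so the block sums are at least
`q^(b - 1) / 4^r`, which is unbounded. For `a > m` a small `ε` and a large `r` make `b > 1`.
-/

open Filter Finset Real

section PartialSums

variable {α : Type*} [Field α] [LinearOrder α] [IsStrictOrderedRing α] {ℓ : ℕ → α}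

theorem monotone_sum_Icc_one (hℓ : 0 ≤ ℓ) : Monotone fun n => ∑ k ∈ Icc 1 n, ℓ k :=
  fun _ _ hij => sum_le_sum_of_subset_of_nonneg (Icc_subset_Icc_right hij) fun k _ _ => hℓ k

theorem Antitone.mul_sum_Icc_one_le (hℓ : Antitone ℓ) {p N : ℕ} (hpN : p ≤ N) :
    (p : α) * ∑ k ∈ Icc 1 N, ℓ k ≤ N * ∑ k ∈ Icc 1 p, ℓ k := by
  induction N, hpN using Nat.le_induction with
  | base => rfl
  | succ N hpN ih =>
    have hlast : (p : α) * ℓ (N + 1) ≤ ∑ k ∈ Icc 1 p, ℓ k := by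
      simpa using card_nsmul_le_sum (Icc 1 p) ℓ (ℓ (N + 1))
        fun k hk => hℓ (by have := (mem_Icc.1 hk).2; omega)
    rw [sum_Icc_succ_top (by omega)]
    push_cast
    linarith

end PartialSums

theorem Monotone.mul_div_sq_le_sum_Icc {g : ℕ → ℝ} (hg : Monotone g) {p N : ℕ}
    (hg0 : 0 ≤ g (p + 1)) :
    ((N - p : ℕ) : ℝ) * (g (p + 1) / (N : ℝ) ^ 2) ≤
      ∑ n ∈ Icc (p + 1) N, 1 / (n : ℝ) ^ 2 * g n := by
  have hterm : ∀ n ∈ Icc (p + 1) N, g (p + 1) / (N : ℝ) ^ 2 ≤ 1 / (n : ℝ) ^ 2 * g n := by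
    intro n hn
    obtain ⟨hpn, hnN⟩ := mem_Icc.1 hn
    have hn0 : (0 : ℝ) < n := by exact_mod_cast (by omega : 0 < n)
    rw [div_eq_mul_one_div, mul_comm]
    gcongr
    exact hg hpn
  simpa using card_nsmul_le_sum _ _ _ hterm

theorem frequently_mul_log_lt_of_le_limsup {u : ℕ → ℝ} {L c : ℝ}
    (hL : (L : EReal) ≤ limsup (fun n : ℕ => ((u n / log n : ℝ) : EReal)) atTop) (hc : c < L) :
    ∃ᶠ n : ℕ in atTop, c * log n < u n := by
  have hfreq := frequently_lt_of_lt_limsup (by isBoundedDefault)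
    ((EReal.coe_lt_coe_iff.2 hc).trans_le hL)
  refine (hfreq.and_eventually (eventually_ge_atTop 2)).mono fun n ⟨hn, h2⟩ => ?_
  have hlog : 0 < log n := log_pos (by exact_mod_cast h2)
  rwa [EReal.coe_lt_coe_iff, lt_div_iff₀ hlog] at hn

theorem exists_one_lt_mul_one_sub_inv_two_pow {m a : ℝ} (hm : 0 < m) (ha : m < a) :
    ∃ ε : ℝ, 0 < ε ∧ ∃ r : ℕ, 1 ≤ r ∧ 1 < ((1 - ε) / m) * (1 - 1 / (2 : ℝ) ^ r) * a := by
  set ε := (a - m) / (2 * a)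
  have ha0 : 0 < a := hm.trans ha
  have hε : 0 < ε := div_pos (by linarith) (by linarith)
  have hone : 1 < ((1 - ε) / m) * a := by
    have : (1 - ε) * a = (a + m) / 2 := by simp only [ε]; field_simp; ring
    rw [div_mul_eq_mul_div, this, one_lt_div hm]
    linarith
  have hlim : Tendsto (fun r : ℕ => ((1 - ε) / m) * (1 - 1 / (2 : ℝ) ^ r) * a) atTop
      (nhds (((1 - ε) / m) * a)) := by
    have h := tendsto_inv_atTop_zero.comp (tendsto_pow_atTop_atTop_of_one_lt (one_lt_two (α := ℝ)))
    simpa only [one_div, sub_zero, mul_one, Function.comp_def] using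
      ((tendsto_const_nhds (x := (1 : ℝ)).sub h).const_mul ((1 - ε) / m)).mul_const a
  obtain ⟨r, hr⟩ := ((hlim.eventually (lt_mem_nhds hone)).and (eventually_ge_atTop 1)).exists
  exact ⟨ε, hε, r, hr.2, hr.1⟩

section DyadicBlocks

variable {ℓ : ℕ → ℝ}

theorem Antitone.one_sub_inv_two_pow_mul_sum_Icc_one_le (hdec : Antitone ℓ) (r q : ℕ) :
    (1 - 1 / (2 : ℝ) ^ r) * ∑ k ∈ Icc 1 (2 ^ r * q), ℓ k ≤ ∑ k ∈ Icc 1 ((2 ^ r - 1) * q), ℓ k := by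
  rcases q.eq_zero_or_pos with rfl | hq
  · simp
  have hN0 : (0 : ℝ) < (2 ^ r * q : ℕ) := by positivity
  have hp : (((2 ^ r - 1) * q : ℕ) : ℝ) = (1 - 1 / 2 ^ r) * (2 ^ r * q : ℕ) := by
    push_cast [Nat.cast_sub Nat.one_le_two_pow]
    field_simp
  have hkey := hdec.mul_sum_Icc_one_le (Nat.mul_le_mul_right q (Nat.sub_le (2 ^ r) 1))
  rw [hp, mul_right_comm] at hkey
  exact le_of_mul_le_mul_right (by simpa [mul_comm] using hkey) hN0

theorem rpow_div_le_sum_dyadic_block (hdec : Antitone ℓ) (hℓ : 0 ≤ ℓ) {a c : ℝ} (ha : 0 ≤ a)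
    {r q : ℕ} (hq : 1 ≤ q) (hc : c * log q ≤ ∑ k ∈ Icc 1 q, ℓ k) :
    (q : ℝ) ^ (c * (1 - 1 / (2 : ℝ) ^ r) * a - 1) / ((2 : ℝ) ^ r) ^ 2 ≤
      ∑ n ∈ Icc ((2 ^ r - 1) * q + 1) (2 ^ r * q),
        1 / (n : ℝ) ^ 2 * exp (a * ∑ k ∈ Icc 1 n, ℓ k) := by
  set S : ℕ → ℝ := fun n => ∑ k ∈ Icc 1 n, ℓ k
  have hS : Monotone S := monotone_sum_Icc_one hℓ
  set p := (2 ^ r - 1) * q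
  set N := 2 ^ r * q
  have hq0 : (0 : ℝ) < q := by exact_mod_cast hq
  have h2r : (1 : ℝ) ≤ 2 ^ r := one_le_pow₀ one_le_two
  have hqN : q ≤ N := Nat.le_mul_of_pos_left q (Nat.two_pow_pos r)
  have hNp : N - p = q := by simp only [p, N, Nat.sub_one_mul]; omega
  have hSp : (1 - 1 / 2 ^ r) * (c * log q) ≤ S p := by
    have hfac : 0 ≤ 1 - 1 / (2 : ℝ) ^ r := sub_nonneg.2 (div_le_one_of_le₀ h2r (by positivity))
    exact (mul_le_mul_of_nonneg_left (hc.trans (hS hqN)) hfac).trans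
      (hdec.one_sub_inv_two_pow_mul_sum_Icc_one_le r q)
  have hexp : (q : ℝ) ^ (c * (1 - 1 / (2 : ℝ) ^ r) * a) ≤ exp (a * S (p + 1)) := by
    rw [rpow_def_of_pos hq0, exp_le_exp]
    calc log q * (c * (1 - 1 / 2 ^ r) * a) = a * ((1 - 1 / 2 ^ r) * (c * log q)) := by ring
      _ ≤ a * S (p + 1) := mul_le_mul_of_nonneg_left (hSp.trans (hS p.le_succ)) ha
  have hblock := Monotone.mul_div_sq_le_sum_Icc (g := fun n => exp (a * S n)) (p := p) (N := N)
    (fun _ _ h => exp_le_exp.2 (mul_le_mul_of_nonneg_left (hS h) ha)) (exp_pos _).le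
  rw [hNp] at hblock
  calc (q : ℝ) ^ (c * (1 - 1 / (2 : ℝ) ^ r) * a - 1) / ((2 : ℝ) ^ r) ^ 2
      = q * ((q : ℝ) ^ (c * (1 - 1 / (2 : ℝ) ^ r) * a) / (N : ℝ) ^ 2) := by
        rw [rpow_sub_one hq0.ne']
        simp only [N]
        push_cast
        field_simp
    _ ≤ q * (exp (a * S (p + 1)) / (N : ℝ) ^ 2) := by gcongr
    _ ≤ _ := hblock

theorem exists_lt_sum_dyadic_block (hdec : Antitone ℓ) (hℓ : 0 ≤ ℓ) {a c : ℝ} (ha : 0 ≤ a)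
    (hfreq : ∃ᶠ q : ℕ in atTop, c * log q < ∑ k ∈ Icc 1 q, ℓ k) {r : ℕ}
    (hb : 1 < c * (1 - 1 / (2 : ℝ) ^ r) * a) (C : ℝ) :
    ∃ q : ℕ, 1 ≤ q ∧ C < ∑ n ∈ Icc ((2 ^ r - 1) * q + 1) (2 ^ r * q),
      1 / (n : ℝ) ^ 2 * exp (a * ∑ k ∈ Icc 1 n, ℓ k) := by
  have hlim : Tendsto (fun q : ℕ => (q : ℝ) ^ (c * (1 - 1 / (2 : ℝ) ^ r) * a - 1) /
      ((2 : ℝ) ^ r) ^ 2) atTop atTop :=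
    ((tendsto_rpow_atTop (by linarith)).comp tendsto_natCast_atTop_atTop).atTop_div_const
      (by positivity)
  obtain ⟨q, hq, hCq, hq1⟩ :=
    (hfreq.and_eventually ((hlim.eventually_gt_atTop C).and (eventually_ge_atTop 1))).exists
  exact ⟨q, hq1, hCq.trans_le (rpow_div_le_sum_dyadic_block hdec hℓ ha hq1 hq.le)⟩

end DyadicBlocks

theorem stmt15_general (ℓ : ℕ → ℝ) (m : ℝ) (hm : 0 < m)
    (hdec : Antitone ℓ) (hpos : ∀ n, 0 < ℓ n)
    (hlimsup : ((1 / m : ℝ) : EReal) ≤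
      Filter.limsup (fun n : ℕ =>
        (((∑ k ∈ Finset.Icc 1 n, ℓ k) / Real.log n : ℝ) : EReal)) atTop) :
    (∀ a : ℝ, m < a → ∀ ε : ℝ, 0 < ε → ∀ r : ℕ, 1 ≤ r →
      1 < ((1 - ε) / m) * (1 - 1 / (2 : ℝ) ^ r) * a →
      ∀ C : ℝ, ∃ q : ℕ, 1 ≤ q ∧
        C < ∑ n ∈ Finset.Icc ((2 ^ r - 1) * q + 1) (2 ^ r * q),
          (1 / (n : ℝ) ^ 2) * Real.exp (a * ∑ k ∈ Finset.Icc 1 n, ℓ k))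
    ∧ ∀ a : ℝ, m < a →
      ¬ Summable (fun n : ℕ =>
        (1 / (n : ℝ) ^ 2) * Real.exp (a * ∑ k ∈ Finset.Icc 1 n, ℓ k)) := by
  have hℓ : 0 ≤ ℓ := fun n => (hpos n).le
  have hblocks : ∀ a : ℝ, m < a → ∀ ε : ℝ, 0 < ε → ∀ r : ℕ, 1 ≤ r →
      1 < ((1 - ε) / m) * (1 - 1 / (2 : ℝ) ^ r) * a →
      ∀ C : ℝ, ∃ q : ℕ, 1 ≤ q ∧
        C < ∑ n ∈ Finset.Icc ((2 ^ r - 1) * q + 1) (2 ^ r * q),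
          (1 / (n : ℝ) ^ 2) * Real.exp (a * ∑ k ∈ Finset.Icc 1 n, ℓ k) := by
    intro a ha ε hε _ _ hb C
    have hc : (1 - ε) / m < 1 / m := div_lt_div_of_pos_right (by linarith) hm
    exact exists_lt_sum_dyadic_block hdec hℓ (hm.trans ha).le
      (frequently_mul_log_lt_of_le_limsup hlimsup hc) hb C
  refine ⟨hblocks, fun a ha hsum => ?_⟩
  obtain ⟨ε, hε, r, hr, hb⟩ := exists_one_lt_mul_one_sub_inv_two_pow hm ha
  obtain ⟨q, -, hq⟩ := hblocks a ha ε hε r hr hb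
    (∑' n : ℕ, (1 / (n : ℝ) ^ 2) * Real.exp (a * ∑ k ∈ Finset.Icc 1 n, ℓ k))
  exact (hsum.sum_le_tsum _ fun n _ => by positivity).not_gt hq

theorem stmt15 (ℓ : ℕ → ℝ) (m : ℝ) (hm : 0 < m)
    (hdec : Antitone ℓ) (hpos : ∀ n, 0 < ℓ n) (hlt : ∀ n, ℓ n < 1)
    (hlimsup : ((1 / m : ℝ) : EReal) ≤
      Filter.limsup (fun n : ℕ =>
        (((∑ k ∈ Finset.Icc 1 n, ℓ k) / Real.log n : ℝ) : EReal)) atTop) :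
    (∀ a : ℝ, m < a → ∀ ε : ℝ, 0 < ε → ∀ r : ℕ, 1 ≤ r →
      1 < ((1 - ε) / m) * (1 - 1 / (2 : ℝ) ^ r) * a →
      ∀ C : ℝ, ∃ q : ℕ, 1 ≤ q ∧
        C < ∑ n ∈ Finset.Icc ((2 ^ r - 1) * q + 1) (2 ^ r * q),
          (1 / (n : ℝ) ^ 2) * Real.exp (a * ∑ k ∈ Finset.Icc 1 n, ℓ k))
    ∧ ∀ a : ℝ, m < a →
      ¬ Summable (fun n : ℕ =>
        (1 / (n : ℝ) ^ 2) * Real.exp (a * ∑ k ∈ Finset.Icc 1 n, ℓ k)) :=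
  stmt15_general ℓ m hm hdec hpos hlimsup
end
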